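/- arXiv:2312.04689 — 5 statements merged into one kernel-verified Lean document; each statement's English description precedes it below -/
import Mathlib

section
/- Let q > 2 be an integer and let δ > 0. Then there exists a finite collection E of pairwise disjoint closed intervals contained in [0, q) ⊂ ℝ, each of length less than δ, partitioned into q disjoint subcollections E = E_1 ∪ ⋯ ∪ E_q, such that for every t ∈ ℝ the set t + ℤ meets at least q − 2 of the subcollections E_i. -/
/-!
Measure lengths in units of `1 / (2qN)`. Family `i` consists of the `N` intervals
`[a, a + 2q - 2]`, `a = i (2qN - 1) + 2qk`, `k < N`: consecutive intervals of a family are `2q`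
units apart, and each family starts `2qN - 1` units after the previous one, so all intervals
are disjoint. Modulo the period `2qN` (that is, modulo `ℤ` before rescaling) the left ends of
family `i` run through all integers `≡ -i (mod 2q)`, so family `i` meets `t + ℤ` unless
`2qN t + i` lies in one of the open gaps `(2qm - 2, 2qm)`. Since these gaps have length `2`
and are `2q > q` apart, for a fixed `t` this happens for at most two indices `i`.
-/

open Set

lemma Fin.ncard_le_two_of_forall_mem_Ioo {q : ℕ} {s : Set (Fin q)} (c : ℝ)
    (h : ∀ i ∈ s, (i : ℝ) ∈ Ioo (c - 2) c) : s.ncard ≤ 2 := by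
  by_contra! hs
  obtain ⟨a, b, d, ha, hb, hd, hab, had, hbd⟩ := (two_lt_ncard_iff).1 hs
  have close : ∀ i ∈ s, ∀ j ∈ s, (i : ℕ) < j + 2 := fun i hi j hj => by
    have := (h i hi).2; have := (h j hj).1
    exact_mod_cast (by linarith : (i : ℝ) < j + 2)
  have := close a ha b hb; have := close b hb a ha; have := close a ha d hd
  have := close d hd a ha; have := close b hb d hd; have := close d hd b hb
  omega

namespace IntervalFamilies

variable (q N : ℕ)

def leftEnd (i k : ℕ) : ℤ := i * (2 * q * N - 1) + 2 * q * k

noncomputable def piece (i k : ℕ) : ℝ × ℝ :=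
  ((leftEnd q N i k : ℝ) / (2 * q * N), ((leftEnd q N i k : ℝ) + 2 * q - 2) / (2 * q * N))

noncomputable def family (i : ℕ) : Finset (ℝ × ℝ) := (Finset.range N).image (piece q N i)

variable {q N}

lemma leftEnd_nonneg (hq : 0 < q) (hN : 0 < N) (i k : ℕ) : 0 ≤ leftEnd q N i k := by
  have : (1 : ℤ) ≤ q * N := by exact_mod_cast Nat.one_le_iff_ne_zero.mpr (by positivity)
  unfold leftEnd
  nlinarith

lemma leftEnd_add_lt {i k : ℕ} (hi : i < q) (hk : k < N) :
    (leftEnd q N i k : ℝ) + 2 * q - 2 < q * (2 * q * N) := by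
  have hi' : (i : ℝ) + 1 ≤ q := by exact_mod_cast hi
  have hk' : (k : ℝ) + 1 ≤ N := by exact_mod_cast hk
  have h0 : (0 : ℝ) ≤ i := i.cast_nonneg
  have h1 : (0 : ℝ) ≤ k := k.cast_nonneg
  have hqN : (0 : ℝ) ≤ 2 * q * N - 1 := by nlinarith
  unfold leftEnd
  push_cast
  nlinarith [mul_nonneg (by linarith : (0 : ℝ) ≤ q - 1 - i) hqN,
    mul_nonneg (by linarith : (0 : ℝ) ≤ q) (by linarith : (0 : ℝ) ≤ N - 1 - k)]

lemma leftEnd_add_lt_leftEnd (hq : 0 < q) {i i' k k' : ℕ} (hk : k < N)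
    (h : i < i' ∨ i = i' ∧ k < k') :
    (leftEnd q N i k : ℝ) + 2 * q - 2 < leftEnd q N i' k' := by
  have hk' : (k : ℝ) + 1 ≤ N := by exact_mod_cast hk
  have hq' : (1 : ℝ) ≤ q := by exact_mod_cast hq
  unfold leftEnd
  push_cast
  rcases h with h | ⟨rfl, h⟩
  · have h' : (i : ℝ) + 1 ≤ i' := by exact_mod_cast h
    have hqN : (0 : ℝ) ≤ 2 * q * N - 1 := by nlinarith
    nlinarith [mul_nonneg (by linarith : (0 : ℝ) ≤ i' - i - 1) hqN,
      mul_nonneg (by linarith : (0 : ℝ) ≤ q) (by linarith : (0 : ℝ) ≤ N - 1 - k),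
      mul_nonneg (by linarith : (0 : ℝ) ≤ q) k'.cast_nonneg]
  · have h' : (k : ℝ) + 1 ≤ k' := by exact_mod_cast h
    nlinarith

lemma exists_leftEnd_eq (hN : 0 < N) (i : ℕ) (m : ℤ) :
    ∃ k < N, ∃ z : ℤ, leftEnd q N i k = 2 * q * m - i + 2 * q * N * z := by
  have hN' : (0 : ℤ) < N := by exact_mod_cast hN
  have hlt := Int.emod_lt_of_pos m hN'
  refine ⟨(m % N).toNat, by omega, i - m / N, ?_⟩
  have := Int.emod_add_mul_ediv m N
  rw [leftEnd, Int.toNat_of_nonneg (Int.emod_nonneg m hN'.ne')]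
  linear_combination (2 * q : ℤ) * this

lemma piece_fst_nonneg (hq : 0 < q) (hN : 0 < N) (i k : ℕ) : 0 ≤ (piece q N i k).1 :=
  div_nonneg (by exact_mod_cast leftEnd_nonneg hq hN i k) (by positivity)

lemma piece_fst_le_snd (hq : 0 < q) (i k : ℕ) : (piece q N i k).1 ≤ (piece q N i k).2 := by
  have : (1 : ℝ) ≤ q := by exact_mod_cast hq
  exact div_le_div_of_nonneg_right (by linarith) (by positivity)

lemma piece_snd_lt {i k : ℕ} (hi : i < q) (hk : k < N) : (piece q N i k).2 < q := by
  have : 0 < q := hi.trans_le' (Nat.zero_le _)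
  have : 0 < N := hk.trans_le' (Nat.zero_le _)
  exact (div_lt_iff₀ (by positivity)).2 (leftEnd_add_lt hi hk)

lemma piece_snd_sub_fst_lt (hq : 0 < q) (hN : 0 < N) (i k : ℕ) :
    (piece q N i k).2 - (piece q N i k).1 < 1 / N := by
  have hq' : (0 : ℝ) < q := by exact_mod_cast hq
  have hN' : (0 : ℝ) < N := by exact_mod_cast hN
  unfold piece
  rw [← sub_div, div_lt_div_iff₀ (by positivity) hN']
  nlinarith

lemma disjoint_piece (hq : 0 < q) {i i' k k' : ℕ} (hk : k < N) (hk' : k' < N)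
    (h : (i, k) ≠ (i', k')) :
    Disjoint (Icc (piece q N i k).1 (piece q N i k).2)
      (Icc (piece q N i' k').1 (piece q N i' k').2) := by
  have : 0 < N := hk.trans_le' (Nat.zero_le _)
  have hpos : (0 : ℝ) < 2 * q * N := by positivity
  have separated : ∀ {i i' k k' : ℕ}, k < N → (i < i' ∨ i = i' ∧ k < k') →
      Disjoint (Icc (piece q N i k).1 (piece q N i k).2)
        (Icc (piece q N i' k').1 (piece q N i' k').2) := fun hk h =>
    disjoint_left.2 fun _ hx hx' =>
      (hx.2.trans_lt (div_lt_div_of_pos_right (leftEnd_add_lt_leftEnd hq hk h) hpos)).not_ge hx'.1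
  rcases lt_trichotomy i i' with hi | rfl | hi
  · exact separated hk (.inl hi)
  · rcases (show k ≠ k' by rintro rfl; exact h rfl).lt_or_gt with hkk | hkk
    · exact separated hk (.inr ⟨rfl, hkk⟩)
    · exact (separated hk' (.inr ⟨rfl, hkk⟩)).symm
  · exact (separated hk' (.inl hi)).symm

lemma exists_mem_family_of_mem_Icc (hq : 0 < q) (hN : 0 < N) {i : ℕ} {t : ℝ} {m : ℤ}
    (h : 2 * q * N * t + i ∈ Icc (2 * q * m : ℝ) (2 * q * m + 2 * q - 2)) :
    ∃ p ∈ family q N i, ∃ z : ℤ, t + z ∈ Icc p.1 p.2 := by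
  obtain ⟨k, hk, z, hz⟩ := exists_leftEnd_eq hN i m
  have hz' : (leftEnd q N i k : ℝ) = 2 * q * m - i + 2 * q * N * z := by exact_mod_cast hz
  have hpos : (0 : ℝ) < 2 * q * N := by positivity
  refine ⟨piece q N i k, Finset.mem_image_of_mem _ (Finset.mem_range.2 hk), z, ?_, ?_⟩
  · rw [piece, div_le_iff₀ hpos, hz']
    linarith [h.1]
  · rw [piece, le_div_iff₀ hpos, hz']
    linarith [h.2]

lemma ncard_setOf_forall_notMem_Icc_le_two (q : ℕ) (y : ℝ) :
    {i : Fin q | ∀ m : ℤ, y + i ∉ Icc (2 * q * m : ℝ) (2 * q * m + 2 * q - 2)}.ncard ≤ 2 := by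
  set M := ⌊y / (2 * q)⌋
  refine Fin.ncard_le_two_of_forall_mem_Ioo (2 * q * (M + 1) - y) fun i hi => ?_
  have hi' : (i : ℝ) + 1 ≤ q := by exact_mod_cast i.isLt
  have hq : (0 : ℝ) < 2 * q := by linarith [(i : ℕ).cast_nonneg (α := ℝ)]
  have hM : 2 * q * M ≤ y ∧ y < 2 * q * M + 2 * q := by
    have h₁ := Int.floor_le (y / (2 * q))
    have h₂ := Int.lt_floor_add_one (y / (2 * q))
    rw [le_div_iff₀ hq] at h₁
    rw [div_lt_iff₀ hq] at h₂
    constructor <;> linarith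
  have h₁ := hi M
  have h₂ := hi (M + 1)
  push_cast at h₂
  constructor
  · by_contra! h
    exact h₁ ⟨by linarith [(i : ℕ).cast_nonneg (α := ℝ)], by linarith⟩
  · by_contra! h
    exact h₂ ⟨by linarith, by linarith⟩

end IntervalFamilies

open IntervalFamilies

theorem stmt_3_general (q : ℕ) (δ : ℝ) (hδ : 0 < δ) :
    -- E_1, …, E_q are finite collections of closed intervals, each interval
    -- recorded by its pair of endpoints
    ∃ E : Fin q → Finset (ℝ × ℝ),
      -- each interval is nondegenerate, contained in [0, q), of length < δ
      (∀ i, ∀ p ∈ E i, p.1 ≤ p.2 ∧ Set.Icc p.1 p.2 ⊆ Set.Ico (0 : ℝ) q ∧ p.2 - p.1 < δ) ∧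
      -- the intervals of the whole collection E = E_1 ∪ ⋯ ∪ E_q are pairwise
      -- disjoint (in particular the subcollections are disjoint)
      (∀ i i' : Fin q, ∀ p ∈ E i, ∀ p' ∈ E i', (i, p) ≠ (i', p') →
        Disjoint (Set.Icc p.1 p.2) (Set.Icc p'.1 p'.2)) ∧
      -- for every t ∈ ℝ the set t + ℤ meets at least q − 2 of the subcollections
      (∀ t : ℝ,
        q - 2 ≤ Set.ncard {i : Fin q | ∃ p ∈ E i, ∃ z : ℤ, t + z ∈ Set.Icc p.1 p.2}) := by
  obtain ⟨N, hN, hNδ⟩ : ∃ N : ℕ, 0 < N ∧ 1 / (N : ℝ) ≤ δ :=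
    ⟨⌈1 / δ⌉₊, Nat.ceil_pos.2 (by positivity), (one_div_le (by positivity) hδ).2 (Nat.le_ceil _)⟩
  refine ⟨fun i => family q N i, ?_, ?_, fun t => ?_⟩
  · intro i p hp
    obtain ⟨k, hk, rfl⟩ := Finset.mem_image.1 hp
    have hk := Finset.mem_range.1 hk
    exact ⟨piece_fst_le_snd i.pos _ _,
      fun x hx => ⟨(piece_fst_nonneg i.pos hN _ _).trans hx.1,
        hx.2.trans_lt (piece_snd_lt i.isLt hk)⟩,
      (piece_snd_sub_fst_lt i.pos hN _ _).trans_le hNδ⟩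
  · intro i i' p hp p' hp' hne
    obtain ⟨k, hk, rfl⟩ := Finset.mem_image.1 hp
    obtain ⟨k', hk', rfl⟩ := Finset.mem_image.1 hp'
    refine disjoint_piece i.pos (Finset.mem_range.1 hk) (Finset.mem_range.1 hk') ?_
    intro hik
    obtain ⟨hii, rfl⟩ := Prod.mk.inj hik
    exact hne (by rw [Fin.ext hii])
  · set hit := {i : Fin q | ∃ p ∈ family q N i, ∃ z : ℤ, t + z ∈ Set.Icc p.1 p.2}
    have hmiss : hitᶜ ⊆ {i : Fin q | ∀ m : ℤ,
        2 * q * N * t + i ∉ Icc (2 * q * m : ℝ) (2 * q * m + 2 * q - 2)} :=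
      fun i hi m hm => hi (exists_mem_family_of_mem_Icc i.pos hN hm)
    have hcard : hit.ncard + hitᶜ.ncard = q := by simpa using ncard_add_ncard_compl hit
    have := (ncard_le_ncard hmiss).trans (ncard_setOf_forall_notMem_Icc_le_two q _)
    omega

theorem stmt_3 (q : ℕ) (hq : 2 < q) (δ : ℝ) (hδ : 0 < δ) :
    -- E_1, …, E_q are finite collections of closed intervals, each interval
    -- recorded by its pair of endpoints
    ∃ E : Fin q → Finset (ℝ × ℝ),
      -- each interval is nondegenerate, contained in [0, q), of length < δ
      (∀ i, ∀ p ∈ E i, p.1 ≤ p.2 ∧ Set.Icc p.1 p.2 ⊆ Set.Ico (0 : ℝ) q ∧ p.2 - p.1 < δ) ∧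
      -- the intervals of the whole collection E = E_1 ∪ ⋯ ∪ E_q are pairwise
      -- disjoint (in particular the subcollections are disjoint)
      (∀ i i' : Fin q, ∀ p ∈ E i, ∀ p' ∈ E i', (i, p) ≠ (i', p') →
        Disjoint (Set.Icc p.1 p.2) (Set.Icc p'.1 p'.2)) ∧
      -- for every t ∈ ℝ the set t + ℤ meets at least q − 2 of the subcollections
      (∀ t : ℝ,
        q - 2 ≤ Set.ncard {i : Fin q | ∃ p ∈ E i, ∃ z : ℤ, t + z ∈ Set.Icc p.1 p.2}) :=
  stmt_3_general q δ hδ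
end

section
/- Let A ⊆ ℝ be a finite set of real numbers containing 1 whose elements are linearly independent over ℚ. Define φ(t) = inf { |t + z₁ − a₁| + |t + z₂ − a₂| : a₁, a₂ ∈ A, z₁, z₂ ∈ ℤ, (z₁, a₁) ≠ (z₂, a₂) }. Then φ is continuous, periodic with period 1, strictly positive everywhere, and σ = inf { φ(t) : t ∈ ℝ } > 0. -/
/-!
Linear independence over `ℚ` together with `1 ∈ A` says that no difference of two distinct
elements of `A` is an integer, so the points `a - z` (`a ∈ A`, `z ∈ ℤ`) are pairwise distinct and,
`A` being finite, uniformly separated by some `c > 0`. By the triangle inequality every sum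
`|t - p| + |t - q|` over two distinct such points is at least `c`. Each of these sums is
`2`-Lipschitz in `t`, hence so is their infimum, and shifting `z` by one gives periodicity.
-/

open Filter Topology

theorem LinearIndepOn.sub_ne_zsmul {K V : Type*} [DivisionRing K] [AddCommGroup V] [Module K V]
    {A : Set V} (hA : LinearIndepOn K id A) {a b u : V} (ha : a ∈ A) (hb : b ∈ A) (hu : u ∈ A)
    (hab : a ≠ b) (hau : a ≠ u) (n : ℤ) : a - b ≠ n • u := by
  intro h
  have hspan : a ∉ Submodule.span K (A \ {a}) :=
    ((hA.mono Set.sdiff_subset).notMem_span_iff_id).2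
      ⟨by rwa [Set.insert_sdiff_singleton, Set.insert_eq_of_mem ha], fun h => h.2 rfl⟩
  have hmem : n • u + b ∈ Submodule.span K (A \ {a}) := by
    refine add_mem (zsmul_mem ?_ n) ?_ <;> apply Submodule.subset_span
    exacts [⟨hu, hau.symm⟩, ⟨hb, hab.symm⟩]
  rw [← sub_eq_iff_eq_add.1 h] at hmem
  exact hspan hmem

theorem sub_ne_intCast_of_linearIndepOn {A : Set ℝ} (hA : LinearIndepOn ℚ id A) (h1 : 1 ∈ A)
    {a b : ℝ} (ha : a ∈ A) (hb : b ∈ A) (hab : a ≠ b) (n : ℤ) : a - b ≠ n := by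
  by_cases ha1 : a = 1
  · intro h
    refine hA.sub_ne_zsmul hb ha h1 hab.symm (ha1 ▸ hab.symm) (-n) ?_
    simp [← h]
  · simpa using hA.sub_ne_zsmul ha hb h1 hab ha1 n

theorem exists_pos_le_abs_sub_sub {A : Set ℝ} (hfin : A.Finite)
    (hA : ∀ a ∈ A, ∀ b ∈ A, a ≠ b → ∀ n : ℤ, a - b ≠ n) :
    ∃ c > 0, ∀ a₁ ∈ A, ∀ a₂ ∈ A, ∀ z₁ z₂ : ℤ, (z₁, a₁) ≠ (z₂, a₂) →
      c ≤ |(z₁ - a₁) - (z₂ - a₂)| := by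
  -- `c` is taken close to `0⁺`, where each of the finitely many strict bounds below holds.
  have hround : ∀ p ∈ A ×ˢ A, ∀ᶠ c in 𝓝[>] (0 : ℝ),
      p.1 ≠ p.2 → c < |p.1 - p.2 - round (p.1 - p.2)| := by
    rintro ⟨a, b⟩ ⟨ha, hb⟩
    refine eventually_imp_distrib_left.2 fun hab => ?_
    refine (eventually_lt_nhds (abs_pos.2 ?_)).filter_mono nhdsWithin_le_nhds
    exact sub_ne_zero.2 (hA a ha b hb hab _)
  obtain ⟨c, hc0, hc1, hc⟩ := (eventually_mem_nhdsWithin.and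
    (((eventually_lt_nhds one_pos).filter_mono nhdsWithin_le_nhds).and
      ((eventually_all_finite (hfin.prod hfin)).2 hround))).exists
  refine ⟨c, hc0, fun a₁ ha₁ a₂ ha₂ z₁ z₂ hne => ?_⟩
  by_cases ha : a₁ = a₂
  · subst ha
    have hz : z₁ - z₂ ≠ 0 := sub_ne_zero.2 fun hz => hne (by rw [hz])
    calc c ≤ 1 := hc1.le
      _ ≤ |((z₁ - z₂ : ℤ) : ℝ)| := by exact_mod_cast Int.one_le_abs hz
      _ = |(z₁ - a₁) - (z₂ - a₁)| := by push_cast; ring_nf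
  · calc c ≤ |a₁ - a₂ - round (a₁ - a₂)| := (hc (a₁, a₂) ⟨ha₁, ha₂⟩ ha).le
      _ ≤ |a₁ - a₂ - ((z₁ - z₂ : ℤ) : ℝ)| := round_le _ _
      _ = |(z₁ - a₁) - (z₂ - a₂)| := by rw [← abs_neg]; push_cast; ring_nf

theorem Real.sInf_le_sInf_add {S T : Set ℝ} {d : ℝ} (hS : BddBelow S) (hT : T.Nonempty)
    (h : ∀ v ∈ T, ∃ w ∈ S, w ≤ v + d) : sInf S ≤ sInf T + d := by
  suffices sInf S - d ≤ sInf T by linarith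
  refine le_csInf hT fun v hv => ?_
  obtain ⟨w, hw, hwv⟩ := h v hv
  linarith [csInf_le hS hw]

def pairDistSums (A : Set ℝ) (t : ℝ) : Set ℝ :=
  {v : ℝ | ∃ a₁ ∈ A, ∃ a₂ ∈ A, ∃ z₁ z₂ : ℤ,
    (z₁, a₁) ≠ (z₂, a₂) ∧ v = |t + z₁ - a₁| + |t + z₂ - a₂|}

section pairDistSums

variable {A : Set ℝ}

theorem pairDistSums_nonempty (hA : A.Nonempty) (t : ℝ) : (pairDistSums A t).Nonempty := by
  obtain ⟨a, ha⟩ := hA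
  exact ⟨_, a, ha, a, ha, 0, 1, by simp, rfl⟩

theorem pairDistSums_bddBelow (t : ℝ) : BddBelow (pairDistSums A t) := by
  refine ⟨0, ?_⟩
  rintro _ ⟨a₁, -, a₂, -, z₁, z₂, -, rfl⟩
  positivity

theorem pairDistSums_add_one (t : ℝ) : pairDistSums A (t + 1) = pairDistSums A t := by
  have shift : ∀ (s : ℝ) (k : ℤ), pairDistSums A (s + k) ⊆ pairDistSums A s := by
    rintro s k _ ⟨a₁, ha₁, a₂, ha₂, z₁, z₂, hne, rfl⟩
    refine ⟨a₁, ha₁, a₂, ha₂, z₁ + k, z₂ + k, ?_, by push_cast; ring_nf⟩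
    simpa [Prod.ext_iff] using hne
  refine Set.Subset.antisymm ?_ ?_
  · simpa using shift t 1
  · simpa using shift (t + 1) (-1)

theorem exists_mem_pairDistSums_le (s : ℝ) {t v : ℝ} (hv : v ∈ pairDistSums A t) :
    ∃ w ∈ pairDistSums A s, w ≤ v + 2 * |s - t| := by
  obtain ⟨a₁, ha₁, a₂, ha₂, z₁, z₂, hne, rfl⟩ := hv
  refine ⟨_, ⟨a₁, ha₁, a₂, ha₂, z₁, z₂, hne, rfl⟩, ?_⟩
  have e₁ := abs_add_le (t + z₁ - a₁) (s - t)
  have e₂ := abs_add_le (t + z₂ - a₂) (s - t)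
  ring_nf at e₁ e₂ ⊢
  linarith

theorem lipschitzWith_sInf_pairDistSums (hA : A.Nonempty) :
    LipschitzWith 2 fun t => sInf (pairDistSums A t) :=
  LipschitzWith.of_le_add_mul 2 fun s t => by
    simpa [Real.dist_eq] using Real.sInf_le_sInf_add (pairDistSums_bddBelow s)
      (pairDistSums_nonempty hA t) fun v hv => exists_mem_pairDistSums_le s hv

theorem le_of_mem_pairDistSums {c t v : ℝ}
    (hc : ∀ a₁ ∈ A, ∀ a₂ ∈ A, ∀ z₁ z₂ : ℤ, (z₁, a₁) ≠ (z₂, a₂) → c ≤ |(z₁ - a₁) - (z₂ - a₂)|)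
    (hv : v ∈ pairDistSums A t) : c ≤ v := by
  obtain ⟨a₁, ha₁, a₂, ha₂, z₁, z₂, hne, rfl⟩ := hv
  calc c ≤ |(z₁ - a₁) - (z₂ - a₂)| := hc a₁ ha₁ a₂ ha₂ z₁ z₂ hne
    _ = |(t + z₁ - a₁) - (t + z₂ - a₂)| := by ring_nf
    _ ≤ |t + z₁ - a₁| + |t + z₂ - a₂| := abs_sub _ _

end pairDistSums

theorem stmt_4 (A : Set ℝ) (hfin : A.Finite) (h1 : (1 : ℝ) ∈ A)
    (hind : LinearIndependent ℚ (fun a : A => (a : ℝ)))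
    (φ : ℝ → ℝ)
    (hφ : ∀ t : ℝ, φ t = sInf {v : ℝ | ∃ a₁ ∈ A, ∃ a₂ ∈ A, ∃ z₁ z₂ : ℤ,
      (z₁, a₁) ≠ (z₂, a₂) ∧ v = |t + z₁ - a₁| + |t + z₂ - a₂|}) :
    Continuous φ ∧ (∀ t : ℝ, φ (t + 1) = φ t) ∧ (∀ t : ℝ, 0 < φ t) ∧
      0 < sInf {v : ℝ | ∃ t : ℝ, v = φ t} := by
  obtain rfl : φ = fun t => sInf (pairDistSums A t) := funext hφ
  obtain ⟨c, hc, hsep⟩ := exists_pos_le_abs_sub_sub hfin fun a ha b hb hab =>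
    sub_ne_intCast_of_linearIndepOn hind h1 ha hb hab
  have hle : ∀ t, c ≤ sInf (pairDistSums A t) := fun t =>
    le_csInf (pairDistSums_nonempty ⟨1, h1⟩ t) fun _ => le_of_mem_pairDistSums hsep
  refine ⟨(lipschitzWith_sInf_pairDistSums ⟨1, h1⟩).continuous,
    fun t => by simp only [pairDistSums_add_one], fun t => hc.trans_le (hle t), ?_⟩
  exact hc.trans_le (le_csInf ⟨_, 0, rfl⟩ fun _ ⟨t, ht⟩ => ht ▸ hle t)
end

section
/- Let (X, ℤ) be a nontrivial minimal dynamical system on a compact metric space X, let U ⊆ X be a nonempty open set, and let φ : X → [0,1] be a continuous map with φ(X \ U) = {1} and such that φ⁻¹(0) has nonempty interior. Then for every x ∈ X there exists a number N (depending only on the set φ⁻¹(0)) such that the product φ(x)·φ(x−1)·⋯·φ(x−N) = 0; consequently the series ξ(x) = Σ_{j≥1} j·φ(x)φ(x−1)⋯φ(x−j+1)(1−φ(x−j)) is a finite sum and defines a continuous function ξ : X → ℝ. -/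
/-! By minimality the translates of the open set `V = interior (φ⁻¹' {0})` cover `X`, and by
compactness finitely many do, so every orbit visits `V` within a uniformly bounded window of
times; after a shift, within `N` backward steps. Each product `φ(x)⋯φ(x−j+1)` with `j > N` then
contains a zero factor, so `ξ` is a finite sum of continuous functions. -/

/-- The action of `z ∈ ℤ` on `X` generated by the homeomorphism `T`:  `x + z = T^z x`. -/
def actZ {X : Type*} [TopologicalSpace X] (T : X ≃ₜ X) (z : ℤ) (x : X) : X :=
  (T.toEquiv ^ z) x

/-- The `j`-th term of the series defining Lindenstrauss' level function:
`j · φ(x)·φ(x−1)⋯φ(x−j+1)·(1−φ(x−j))`. -/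
noncomputable def levelTerm {X : Type*} [TopologicalSpace X] (T : X ≃ₜ X)
    (φ : X → ℝ) (j : ℕ) (x : X) : ℝ :=
  (j : ℝ) * (∏ i ∈ Finset.range j, φ (actZ T (-(i : ℤ)) x)) * (1 - φ (actZ T (-(j : ℤ)) x))

section

variable {X : Type*} [TopologicalSpace X] (T : X ≃ₜ X)

theorem actZ_eq_zpow (z : ℤ) : actZ T z = ⇑(T ^ z) := by
  let toPerm : (X ≃ₜ X) →* Equiv.Perm X := ⟨⟨Homeomorph.toEquiv, rfl⟩, fun _ _ => rfl⟩
  funext x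
  exact congrArg (· x) (map_zpow toPerm T z).symm

@[fun_prop]
theorem continuous_actZ (z : ℤ) : Continuous (actZ T z) := by
  rw [actZ_eq_zpow]
  exact (T ^ z).continuous

theorem actZ_actZ (a b : ℤ) (x : X) : actZ T a (actZ T b x) = actZ T (a + b) x := by
  simp only [actZ_eq_zpow, zpow_add, Homeomorph.mul_apply]

theorem exists_forall_exists_actZ_neg_mem [CompactSpace X]
    (hmin : ∀ x : X, Dense (Set.range fun z : ℤ => actZ T z x))
    {V : Set X} (hV : IsOpen V) (hVne : V.Nonempty) :
    ∃ N : ℕ, ∀ x : X, ∃ j ≤ N, actZ T (-(j : ℤ)) x ∈ V := by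
  have hcover : Set.univ ⊆ ⋃ z : ℤ, actZ T z ⁻¹' V := fun x _ => by
    obtain ⟨y, ⟨z, rfl⟩, hy⟩ := (hmin x).exists_mem_open hV hVne
    exact Set.mem_iUnion.2 ⟨z, hy⟩
  obtain ⟨t, ht⟩ := isCompact_univ.elim_finite_subcover _
    (fun z => hV.preimage (continuous_actZ T z)) hcover
  set M := t.sup Int.natAbs
  -- shifting by `-M` turns the window `[-M, M]` of return times into `[-2M, 0]`
  refine ⟨2 * M, fun x => ?_⟩
  obtain ⟨z, hzt, hz⟩ := Set.mem_iUnion₂.1 (ht (Set.mem_univ (actZ T (-M) x)))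
  have hzM : z.natAbs ≤ M := Finset.le_sup hzt
  refine ⟨(M - z).toNat, by omega, ?_⟩
  rw [Set.mem_preimage, actZ_actZ] at hz
  convert hz using 2
  omega

variable {T}

theorem continuous_levelTerm {φ : X → ℝ} (hφ : Continuous φ) (j : ℕ) :
    Continuous (levelTerm T φ j) := by
  unfold levelTerm
  fun_prop

theorem levelTerm_eq_zero_of_prod_eq_zero {φ : X → ℝ} {N j : ℕ} {x : X}
    (hprod : ∏ i ∈ Finset.range (N + 1), φ (actZ T (-(i : ℤ)) x) = 0) (hj : N < j) :
    levelTerm T φ j x = 0 := by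
  obtain ⟨i, hi, hφi⟩ := Finset.prod_eq_zero_iff.1 hprod
  have : ∏ i ∈ Finset.range j, φ (actZ T (-(i : ℤ)) x) = 0 :=
    Finset.prod_eq_zero (Finset.range_subset_range.2 hj hi) hφi
  simp [levelTerm, this]

end

theorem continuous_tsum_of_forall_eq_zero {X M : Type*} [TopologicalSpace X]
    [TopologicalSpace M] [AddCommMonoid M] [ContinuousAdd M] {f : ℕ → X → M} {N : ℕ}
    (hf : ∀ j, Continuous (f j)) (hzero : ∀ x j, N < j → f j x = 0) :
    Continuous fun x => ∑' j, f j x := by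
  have hsum : (fun x => ∑' j, f j x) = fun x => ∑ j ∈ Finset.range (N + 1), f j x := by
    funext x
    exact tsum_eq_sum fun j hj => hzero x j (by simpa [Nat.lt_succ_iff] using hj)
  rw [hsum]
  exact continuous_finsetSum _ fun j _ => hf j

theorem stmt_7_general {X : Type*} [MetricSpace X] [CompactSpace X]
    (T : X ≃ₜ X)
    -- the ℤ-action is minimal: every orbit is dense
    (hmin : ∀ x : X, Dense (Set.range fun z : ℤ => actZ T z x))
    (φ : X → ℝ) (hφcont : Continuous φ)
    (hφ0 : (interior (φ ⁻¹' {0})).Nonempty) :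
    ∃ N : ℕ,
      -- every random walk stops within N steps: the product φ(x)·φ(x−1)⋯φ(x−N) vanishes
      (∀ x : X, ∏ j ∈ Finset.range (N + 1), φ (actZ T (-(j : ℤ)) x) = 0) ∧
      -- consequently all terms of the series beyond N vanish: it is a finite sum
      (∀ x : X, ∀ j : ℕ, N < j → levelTerm T φ j x = 0) ∧
      -- and the level function ξ(x) = Σ_{j} j·φ(x)⋯φ(x−j+1)(1−φ(x−j)) is continuous
      Continuous (fun x => ∑' j : ℕ, levelTerm T φ j x) := by
  obtain ⟨N, hvisit⟩ := exists_forall_exists_actZ_neg_mem T hmin isOpen_interior hφ0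
  have hprod : ∀ x : X, ∏ j ∈ Finset.range (N + 1), φ (actZ T (-(j : ℤ)) x) = 0 := fun x => by
    obtain ⟨j, hjN, hj⟩ := hvisit x
    exact Finset.prod_eq_zero (Finset.mem_range.2 (Nat.lt_succ_of_le hjN)) (interior_subset hj : _ ∈ φ ⁻¹' {0})
  have hvanish : ∀ x : X, ∀ j : ℕ, N < j → levelTerm T φ j x = 0 :=
    fun _ _ => levelTerm_eq_zero_of_prod_eq_zero (hprod _)
  exact ⟨N, hprod, hvanish,
    continuous_tsum_of_forall_eq_zero (continuous_levelTerm hφcont) hvanish⟩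

theorem stmt_7 {X : Type*} [MetricSpace X] [CompactSpace X] [Nontrivial X]
    (T : X ≃ₜ X)
    -- the ℤ-action is minimal: every orbit is dense
    (hmin : ∀ x : X, Dense (Set.range fun z : ℤ => actZ T z x))
    (U : Set X) (hUopen : IsOpen U) (hUne : U.Nonempty)
    (φ : X → ℝ) (hφcont : Continuous φ) (hφ01 : ∀ x, φ x ∈ Set.Icc (0 : ℝ) 1)
    (hφU : ∀ x ∉ U, φ x = 1)
    (hφ0 : (interior (φ ⁻¹' {0})).Nonempty) :
    ∃ N : ℕ,
      -- every random walk stops within N steps: the product φ(x)·φ(x−1)⋯φ(x−N) vanishes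
      (∀ x : X, ∏ j ∈ Finset.range (N + 1), φ (actZ T (-(j : ℤ)) x) = 0) ∧
      -- consequently all terms of the series beyond N vanish: it is a finite sum
      (∀ x : X, ∀ j : ℕ, N < j → levelTerm T φ j x = 0) ∧
      -- and the level function ξ(x) = Σ_{j} j·φ(x)⋯φ(x−j+1)(1−φ(x−j)) is continuous
      Continuous (fun x => ∑' j : ℕ, levelTerm T φ j x) :=
  stmt_7_general T hmin φ hφcont hφ0
end

section
/- Let X be a compact metric space and let A_0, …, A_n be finite open covers of X. Then the common refinement A = A_0 ∨ ⋯ ∨ A_n = { A_0 ∩ ⋯ ∩ A_n : A_i ∈ A_i } can be refined by an open cover of X of order at most (ord A_0 − 1) + ⋯ + (ord A_n − 1) + 1. -/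
/-- The order of a finite family of sets: the maximal number of its members
having a common point. -/
noncomputable def ordCover {X : Type*} (A : Finset (Set X)) : ℕ :=
  sSup {n : ℕ | ∃ x : X, ∃ B ⊆ A, B.card = n ∧ ∀ s ∈ B, x ∈ s}

-- An auxiliary "bump" function associated to a set: positive exactly on the
-- interior (for open sets, on the set itself), continuous.
open Classical in
noncomputable def fS {X : Type*} [MetricSpace X] (s : Set X) (x : X) : ℝ :=
  if sᶜ = (∅ : Set X) then 1 else Metric.infDist x sᶜ

lemma fS_continuous {X : Type*} [MetricSpace X] (s : Set X) : Continuous (fS s) := by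
  unfold fS
  by_cases h : sᶜ = (∅ : Set X) <;> [simp only [h, eq_self_iff_true, if_true]; simp only [if_neg h]]
  · exact continuous_const
  · exact Metric.continuous_infDist_pt _

lemma fS_nonneg {X : Type*} [MetricSpace X] (s : Set X) (x : X) : 0 ≤ fS s x := by
  unfold fS
  by_cases h : sᶜ = (∅ : Set X) <;> [simp only [h, eq_self_iff_true, if_true]; simp only [if_neg h]]
  · norm_num
  · exact Metric.infDist_nonneg

lemma fS_pos {X : Type*} [MetricSpace X] {s : Set X} (hs : IsOpen s) {x : X}
    (hx : x ∈ s) : 0 < fS s x := by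
  unfold fS
  by_cases h : sᶜ = (∅ : Set X) <;> [simp only [h, eq_self_iff_true, if_true]; simp only [if_neg h]]
  · norm_num
  · exact (hs.isClosed_compl.notMem_iff_infDist_pos
        (Set.nonempty_iff_ne_empty.2 h)).1 (by simpa using hx)

lemma mem_of_fS_pos {X : Type*} [MetricSpace X] {s : Set X} {x : X}
    (h : 0 < fS s x) : x ∈ s := by
  unfold fS at h
  by_cases hc : sᶜ = (∅ : Set X)
  · have : s = Set.univ := by
      simpa [Set.compl_empty_iff] using hc
    simp [this]
  · rw [if_neg hc] at h
    by_contra hx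
    have : Metric.infDist x sᶜ = 0 := Metric.infDist_zero_of_mem (by simpa using hx)
    linarith

/-- The basic open sets of the refining cover: points admitting a positive
threshold `θ` separating the values of the bump functions of the sets in `σ i`
(above `θ`) from those of the other members of `A i` (below `θ`). -/
def Wset {X : Type*} [MetricSpace X] {n : ℕ} (A σ : Fin (n + 1) → Finset (Set X)) :
    Set X :=
  {x | ∃ θ : ℝ, 0 < θ ∧ ∀ i, (∀ s ∈ σ i, θ < fS s x) ∧
    (∀ s ∈ A i, s ∉ σ i → fS s x < θ)}

lemma isOpen_Wset {X : Type*} [MetricSpace X] {n : ℕ}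
    (A σ : Fin (n + 1) → Finset (Set X)) : IsOpen (Wset A σ) := by
  rw [isOpen_iff_forall_mem_open]
  rintro x ⟨θ, hθ, hx⟩
  refine ⟨⋂ i, ((⋂ s ∈ σ i, {y | θ < fS s y}) ∩
      ⋂ s ∈ A i, {y | s ∉ σ i → fS s y < θ}), ?_, ?_, ?_⟩
  · intro y hy
    simp only [Set.mem_iInter, Set.mem_inter_iff, Set.mem_setOf_eq] at hy
    exact ⟨θ, hθ, fun i => ⟨(hy i).1, (hy i).2⟩⟩
  · refine isOpen_iInter_of_finite fun i => IsOpen.inter ?_ ?_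
    · exact isOpen_biInter_finset fun s _ =>
        isOpen_lt continuous_const (fS_continuous s)
    · refine isOpen_biInter_finset fun s _ => ?_
      by_cases h : s ∈ σ i
      · simp only [h, not_true_eq_false, false_implies, Set.setOf_true]
        exact isOpen_univ
      · simp only [h, not_false_eq_true, true_implies]
        exact isOpen_lt (fS_continuous s) continuous_const
  · simp only [Set.mem_iInter, Set.mem_inter_iff, Set.mem_setOf_eq]
    exact fun i => ⟨(hx i).1, (hx i).2⟩

lemma card_le_ordCover {X : Type*} {A B : Finset (Set X)} (x : X)
    (hBA : B ⊆ A) (hx : ∀ s ∈ B, x ∈ s) : B.card ≤ ordCover A := by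
  refine le_csSup ⟨A.card, ?_⟩ ⟨x, B, hBA, rfl, hx⟩
  rintro k ⟨y, D, hD, rfl, -⟩
  exact Finset.card_le_card hD

theorem stmt_13 {X : Type*} [MetricSpace X] [CompactSpace X]
    (n : ℕ) (A : Fin (n + 1) → Finset (Set X))
    (hopen : ∀ i, ∀ s ∈ A i, IsOpen s)
    (hcover : ∀ i, ∀ x : X, ∃ s ∈ A i, x ∈ s) :
    -- there is an open cover B refining A_0 ∨ ⋯ ∨ A_n
    ∃ B : Finset (Set X),
      (∀ s ∈ B, IsOpen s) ∧ (∀ x : X, ∃ s ∈ B, x ∈ s) ∧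
      -- refinement: every element of B is contained in an intersection
      -- A_0 ∩ ⋯ ∩ A_n with A_i ∈ A_i
      (∀ s ∈ B, ∃ c : Fin (n + 1) → Set X, (∀ i, c i ∈ A i) ∧ s ⊆ ⋂ i, c i) ∧
      -- order bound
      ordCover B ≤ (∑ i, (ordCover (A i) - 1)) + 1 := by
  classical
  set I : Finset (Fin (n + 1) → Finset (Set X)) :=
    Fintype.piFinset (fun i => ((A i).powerset.erase ∅)) with hI
  have hI_mem : ∀ σ ∈ I, ∀ i, (σ i).Nonempty ∧ σ i ⊆ A i := by
    intro σ hσ i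
    have := Fintype.mem_piFinset.1 hσ i
    rw [Finset.mem_erase, Finset.mem_powerset] at this
    exact ⟨Finset.nonempty_of_ne_empty this.1, this.2⟩
  refine ⟨I.image (Wset A), ?_, ?_, ?_, ?_⟩
  · -- openness
    intro s hs
    obtain ⟨σ, -, rfl⟩ := Finset.mem_image.1 hs
    exact isOpen_Wset A σ
  · -- cover
    intro x
    set σ : Fin (n + 1) → Finset (Set X) :=
      fun i => (A i).filter (fun s => 0 < fS s x) with hσdef
    have hσA : ∀ i, σ i ⊆ A i := fun i => Finset.filter_subset _ _
    have hσne : ∀ i, (σ i).Nonempty := by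
      intro i
      obtain ⟨s, hs, hxs⟩ := hcover i x
      exact ⟨s, Finset.mem_filter.2 ⟨hs, fS_pos (hopen i s hs) hxs⟩⟩
    have hσI : σ ∈ I := by
      refine Fintype.mem_piFinset.2 fun i => ?_
      rw [Finset.mem_erase, Finset.mem_powerset]
      exact ⟨Finset.nonempty_iff_ne_empty.1 (hσne i), hσA i⟩
    -- choose the threshold as half of the smallest positive value
    set V : Finset ℝ :=
      ((Finset.univ.biUnion A).image (fun s => fS s x)).filter (fun r => 0 < r)
      with hVdef
    have hVne : V.Nonempty := by
      obtain ⟨s, hs, hxs⟩ := hcover 0 x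
      refine ⟨fS s x, Finset.mem_filter.2 ⟨Finset.mem_image.2 ⟨s, ?_, rfl⟩,
        fS_pos (hopen 0 s hs) hxs⟩⟩
      exact Finset.mem_biUnion.2 ⟨0, Finset.mem_univ _, hs⟩
    set θ : ℝ := V.min' hVne / 2 with hθdef
    have hminpos : 0 < V.min' hVne :=
      (Finset.mem_filter.1 (V.min'_mem hVne)).2
    have hθpos : 0 < θ := by positivity
    have hθlt : θ < V.min' hVne := by
      rw [hθdef]; linarith
    refine ⟨Wset A σ, Finset.mem_image.2 ⟨σ, hσI, rfl⟩, θ, hθpos, fun i => ⟨?_, ?_⟩⟩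
    · intro s hs
      have hpos : 0 < fS s x := (Finset.mem_filter.1 hs).2
      have hmem : fS s x ∈ V := Finset.mem_filter.2
        ⟨Finset.mem_image.2 ⟨s, Finset.mem_biUnion.2
          ⟨i, Finset.mem_univ _, (Finset.mem_filter.1 hs).1⟩, rfl⟩, hpos⟩
      exact lt_of_lt_of_le hθlt (V.min'_le _ hmem)
    · intro s hs hns
      have : ¬ 0 < fS s x := fun h => hns (Finset.mem_filter.2 ⟨hs, h⟩)
      have h0 : fS s x ≤ 0 := not_lt.1 this
      linarith
  · -- refinement
    intro s hs
    obtain ⟨σ, hσ, rfl⟩ := Finset.mem_image.1 hs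
    have h := hI_mem σ hσ
    refine ⟨fun i => ((h i).1).choose, fun i => (h i).2 ((h i).1).choose_spec, ?_⟩
    rintro x ⟨θ, hθ, hx⟩
    refine Set.mem_iInter.2 fun i => ?_
    exact mem_of_fS_pos (lt_trans hθ ((hx i).1 _ ((h i).1).choose_spec))
  · -- order bound
    refine csSup_le' ?_
    rintro m ⟨x, C, hCB, rfl, hxC⟩
    rcases C.eq_empty_or_nonempty with rfl | ⟨t₀, ht₀⟩
    · simp
    have hchoose : ∀ t ∈ C, ∃ σ, σ ∈ I ∧ Wset A σ = t :=
      fun t ht => Finset.mem_image.1 (hCB ht)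
    choose! Φ hΦI hΦW using hchoose
    have hΦ : ∀ t ∈ C, Φ t ∈ I ∧ Wset A (Φ t) = t := fun t ht => ⟨hΦI t ht, hΦW t ht⟩
    -- each point of C contains x, so x ∈ Wset A (Φ t) with a threshold
    have hxW : ∀ t ∈ C, x ∈ Wset A (Φ t) := by
      intro t ht
      rw [(hΦ t ht).2]
      exact hxC t ht
    -- cardinality bounds
    have hcard_le : ∀ t ∈ C, ∀ i, (Φ t i).card ≤ ordCover (A i) := by
      intro t ht i
      obtain ⟨θ, hθ, hw⟩ := hxW t ht
      refine card_le_ordCover x (hI_mem _ (hΦ t ht).1 i).2 fun s hs => ?_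
      exact mem_of_fS_pos (lt_trans hθ ((hw i).1 s hs))
    have hcard_ge : ∀ t ∈ C, ∀ i, 1 ≤ (Φ t i).card := by
      intro t ht i
      exact Finset.card_pos.2 (hI_mem _ (hΦ t ht).1 i).1
    -- comparability
    have hcomp : ∀ t ∈ C, ∀ t' ∈ C,
        (∀ i, Φ t i ⊆ Φ t' i) ∨ (∀ i, Φ t' i ⊆ Φ t i) := by
      have key : ∀ t ∈ C, ∀ t' ∈ C, ∀ θ θ' : ℝ,
          (0 < θ ∧ ∀ i, (∀ s ∈ Φ t i, θ < fS s x) ∧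
            (∀ s ∈ A i, s ∉ Φ t i → fS s x < θ)) →
          (0 < θ' ∧ ∀ i, (∀ s ∈ Φ t' i, θ' < fS s x) ∧
            (∀ s ∈ A i, s ∉ Φ t' i → fS s x < θ')) →
          θ ≤ θ' → ∀ i, Φ t' i ⊆ Φ t i := by
        intro t ht t' ht' θ θ' h h' hle i s hs
        have h1 : θ' < fS s x := (h'.2 i).1 s hs
        by_contra hns
        have h2 : fS s x < θ :=
          (h.2 i).2 s ((hI_mem _ (hΦ t' ht').1 i).2 hs) hns
        linarith
      intro t ht t' ht'
      obtain ⟨θ, hθ, hw⟩ := hxW t ht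
      obtain ⟨θ', hθ', hw'⟩ := hxW t' ht'
      rcases le_total θ θ' with hle | hle
      · exact Or.inr (key t ht t' ht' θ θ' ⟨hθ, hw⟩ ⟨hθ', hw'⟩ hle)
      · exact Or.inl (key t' ht' t ht θ' θ ⟨hθ', hw'⟩ ⟨hθ, hw⟩ hle)
    -- the rank map
    have hinj : (↑C : Set (Set X)).InjOn (fun t => ∑ i, (Φ t i).card) := by
      intro t ht t' ht' heq0
      have heq : ∑ i, (Φ t i).card = ∑ i, (Φ t' i).card := heq0
      have hsub : (∀ i, Φ t i ⊆ Φ t' i) ∨ (∀ i, Φ t' i ⊆ Φ t i) := hcomp t ht t' ht'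
      have hEq : Φ t = Φ t' := by
        rcases hsub with hsub | hsub
        · funext i
          have hc : ∀ i ∈ Finset.univ, (Φ t i).card ≤ (Φ t' i).card :=
            fun i _ => Finset.card_le_card (hsub i)
          have := (Finset.sum_eq_sum_iff_of_le hc).1 heq i (Finset.mem_univ i)
          exact Finset.eq_of_subset_of_card_le (hsub i) this.ge
        · funext i
          have hc : ∀ i ∈ Finset.univ, (Φ t' i).card ≤ (Φ t i).card :=
            fun i _ => Finset.card_le_card (hsub i)
          have := (Finset.sum_eq_sum_iff_of_le hc).1 heq.symm i (Finset.mem_univ i)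
          exact (Finset.eq_of_subset_of_card_le (hsub i) this.ge).symm
      rw [← (hΦ t ht).2, ← (hΦ t' ht').2, hEq]
    have hmaps : ∀ t ∈ C, (∑ i, (Φ t i).card) ∈ Finset.Icc (n + 1) (∑ i, ordCover (A i)) := by
      intro t ht
      rw [Finset.mem_Icc]
      constructor
      · calc n + 1 = ∑ _i : Fin (n + 1), 1 := by simp
          _ ≤ ∑ i, (Φ t i).card := Finset.sum_le_sum fun i _ => hcard_ge t ht i
      · exact Finset.sum_le_sum fun i _ => hcard_le t ht i
    have hm : C.card ≤ (Finset.Icc (n + 1) (∑ i, ordCover (A i))).card :=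
      Finset.card_le_card_of_injOn (fun t => ∑ i, (Φ t i).card) hmaps hinj
    rw [Nat.card_Icc] at hm
    -- each ordCover (A i) ≥ 1
    have hord_ge : ∀ i, 1 ≤ ordCover (A i) :=
      fun i => le_trans (hcard_ge t₀ ht₀ i) (hcard_le t₀ ht₀ i)
    have hsum : (∑ i, (ordCover (A i) - 1)) + (n + 1) = ∑ i, ordCover (A i) := by
      calc (∑ i, (ordCover (A i) - 1)) + (n + 1)
          = (∑ i, (ordCover (A i) - 1)) + ∑ _i : Fin (n + 1), 1 := by simp
        _ = ∑ i, ((ordCover (A i) - 1) + 1) := by rw [← Finset.sum_add_distrib]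
        _ = ∑ i, ordCover (A i) :=
            Finset.sum_congr rfl fun i _ => Nat.sub_add_cancel (hord_ge i)
    omega
end

section
/- Let X be a compact metric space, U a finite open cover of X with ord(U) ≤ n+1, and m ≥ n an integer. Then there exist finite families F_1, …, F_{m+1} of pairwise disjoint closed subsets of X such that the union F = F_1 ∪ ⋯ ∪ F_{m+1} refines U and covers X at least m − n + 1 times (every point of X belongs to elements of at least m − n + 1 of the families F_i). -/
open Finset Function Set

lemma card_le_of_ordCover_le {X : Type*} {U B : Finset (Set X)} {k : ℕ} (hU : ordCover U ≤ k)
    (hBU : B ⊆ U) {x : X} (hx : ∀ s ∈ B, x ∈ s) : #B ≤ k := by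
  have hbdd : BddAbove {n : ℕ | ∃ x : X, ∃ B ⊆ U, #B = n ∧ ∀ s ∈ B, x ∈ s} := by
    refine ⟨#U, ?_⟩
    rintro _ ⟨_, B', hB', rfl, -⟩
    exact card_le_card hB'
  exact (le_csSup hbdd ⟨x, B, hBU, rfl, hx⟩).trans hU

lemma PartitionOfUnity.IsSubordinate.card_finsupport_le_of_ordCover_le {X : Type*}
    [TopologicalSpace X] {U : Finset (Set X)} {s : Set X} {ρ : PartitionOfUnity U X s}
    (hρ : ρ.IsSubordinate (↑)) {k : ℕ} (hU : ordCover U ≤ k) (x : X) :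
    #(ρ.finsupport x) ≤ k := by
  classical
  rw [← Finset.card_image_of_injective _ Subtype.val_injective]
  refine card_le_of_ordCover_le hU (fun t ht => ?_) (x := x) fun t ht => ?_
  all_goals obtain ⟨u, hu, rfl⟩ := Finset.mem_image.1 ht
  · exact u.2
  · exact hρ u (subset_tsupport _ ((ρ.mem_finsupport x).1 hu))

lemma exists_one_div_le_of_sum_eq_one {ι : Type*} {s : Finset ι} {g : ι → ℝ} {k : ℕ}
    (h : ∑ i ∈ s, g i = 1) (hs : #s ≤ k) : ∃ i ∈ s, 1 / (k : ℝ) ≤ g i :=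
  exists_le_of_sum_le (nonempty_of_sum_ne_zero (h ▸ one_ne_zero)) <| by
    rw [h, sum_const, nsmul_eq_mul, mul_one_div]
    exact div_le_one_of_le₀ (by exact_mod_cast hs) k.cast_nonneg

lemma Pairwise.ncard_setOf_exists_mem_le {κ α : Type*} [Finite κ] {J : κ → Set α}
    (hJ : Pairwise (Disjoint on J)) (T : Finset α) : {i | ∃ t ∈ T, t ∈ J i}.ncard ≤ #T := by
  classical
  have := Fintype.ofFinite κ
  rw [ncard_eq_toFinset_card']
  refine card_le_card_of_forall_subsingleton (fun i t => t ∈ J i) (by simp)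
    fun t _ i hi j hj => ?_
  by_contra hij
  exact Set.disjoint_left.1 (hJ hij) hi.2 hj.2

lemma pairwise_disjoint_Ioo_natCast_mul (δ : ℝ) :
    Pairwise (Disjoint on fun i : ℕ => Ioo (i * δ) ((i + 1) * δ)) := fun i j hij => by
  simpa [zsmul_eq_mul] using
    pairwise_disjoint_Ioo_add_zsmul (0 : ℝ) δ (show (i : ℤ) ≠ j by exact_mod_cast hij)

section LevelFamily

variable {ι X : Type*} (φ : ι → X → ℝ) (a b : ℝ)

def levelPiece (S : Finset ι) : Set X :=
  {x | (∀ u ∈ S, b ≤ φ u x) ∧ ∀ u ∉ S, φ u x ≤ a}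

open Classical in
noncomputable def levelFamily [Fintype ι] : Finset (Set X) :=
  (univ.filter fun S : Finset ι => S.Nonempty).image (levelPiece φ a b)

variable {φ a b}

lemma isClosed_levelPiece [TopologicalSpace X] (hφ : ∀ u, Continuous (φ u)) (S : Finset ι) :
    IsClosed (levelPiece φ a b S) := by
  simp only [levelPiece, ofPred_and, ofPred_forall]
  exact .inter (isClosed_biInter fun u _ => isClosed_le (by fun_prop) (hφ u))
    (isClosed_iInter fun u => isClosed_iInter fun _ => isClosed_le (hφ u) (by fun_prop))

lemma disjoint_levelPiece (hab : a < b) {S T : Finset ι} (hST : S ≠ T) :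
    Disjoint (levelPiece φ a b S) (levelPiece φ a b T) := by
  obtain ⟨u, hu⟩ : ∃ u, ¬(u ∈ S ↔ u ∈ T) := by
    by_contra! h
    exact hST (Finset.ext h)
  refine Set.disjoint_left.2 fun x hS hT => ?_
  by_cases huS : u ∈ S
  · linarith [hS.1 u huS, hT.2 u (by tauto)]
  · linarith [hT.1 u (by tauto), hS.2 u huS]

lemma levelPiece_subset_support (hb : 0 < b) {S : Finset ι} {u : ι} (hu : u ∈ S) :
    levelPiece φ a b S ⊆ support (φ u) :=
  fun _ hx => (hb.trans_le (hx.1 u hu)).ne'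

variable [Fintype ι]

lemma isClosed_of_mem_levelFamily [TopologicalSpace X] (hφ : ∀ u, Continuous (φ u))
    {s : Set X} (hs : s ∈ levelFamily φ a b) : IsClosed s := by
  obtain ⟨S, -, rfl⟩ := Finset.mem_image.1 hs
  exact isClosed_levelPiece hφ S

lemma disjoint_of_mem_levelFamily (hab : a < b) {s t : Set X} (hs : s ∈ levelFamily φ a b)
    (ht : t ∈ levelFamily φ a b) (hst : s ≠ t) : Disjoint s t := by
  obtain ⟨S, -, rfl⟩ := Finset.mem_image.1 hs
  obtain ⟨T, -, rfl⟩ := Finset.mem_image.1 ht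
  exact disjoint_levelPiece hab fun h => hst (h ▸ rfl)

lemma exists_subset_support_of_mem_levelFamily (hb : 0 < b) {s : Set X}
    (hs : s ∈ levelFamily φ a b) : ∃ u, s ⊆ support (φ u) := by
  obtain ⟨S, hS, rfl⟩ := Finset.mem_image.1 hs
  obtain ⟨u, hu⟩ := (Finset.mem_filter.1 hS).2
  exact ⟨u, levelPiece_subset_support hb hu⟩

lemma exists_mem_levelFamily {x : X} (hx : ∀ u, φ u x ∉ Ioo a b) {u₀ : ι} (hu₀ : b ≤ φ u₀ x) :
    ∃ s ∈ levelFamily φ a b, x ∈ s := by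
  classical
  refine ⟨levelPiece φ a b {u | b ≤ φ u x}, Finset.mem_image.2 ⟨_, ?_, rfl⟩, ?_, ?_⟩
  · exact mem_filter.2 ⟨mem_univ _, ⟨u₀, by simpa using hu₀⟩⟩
  · simp
  · intro u hu
    simp only [Finset.mem_filter, Finset.mem_univ, true_and, not_le] at hu
    exact not_lt.1 fun h => hx u ⟨h, hu⟩

/-- An index `i` is missed only if some value `φ u x` with `u ∈ T`, `u ≠ u₀`, lies in
`Ioo (a i) (b i)`; by disjointness each such value spoils at most one index. -/
lemma nat_card_add_one_le_ncard_mem_levelFamily_add_card {κ : Type*} [Finite κ] {a b : κ → ℝ}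
    (hab : Pairwise (Disjoint on fun i => Ioo (a i) (b i))) (ha : ∀ i, 0 ≤ a i) {c : ℝ}
    (hb : ∀ i, b i ≤ c) {x : X} {T : Finset ι} (hT : ∀ u ∉ T, φ u x = 0) {u₀ : ι}
    (hu₀T : u₀ ∈ T) (hu₀ : c ≤ φ u₀ x) :
    Nat.card κ + 1 ≤ {i | ∃ s ∈ levelFamily φ (a i) (b i), x ∈ s}.ncard + #T := by
  classical
  set C := {i | ∃ s ∈ levelFamily φ (a i) (b i), x ∈ s}
  have hbad : Cᶜ ⊆ {i | ∃ v ∈ (T.erase u₀).image (φ · x), v ∈ Ioo (a i) (b i)} := by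
    intro i hi
    by_contra h
    refine hi (exists_mem_levelFamily (fun u hu => h ⟨φ u x, Finset.mem_image.2
      ⟨u, mem_erase.2 ⟨?_, ?_⟩, rfl⟩, hu⟩) ((hb i).trans hu₀))
    · rintro rfl
      exact hu.2.not_ge ((hb i).trans hu₀)
    · by_contra hu'
      exact (ha i).not_gt (hT u hu' ▸ hu.1)
  calc Nat.card κ + 1 = C.ncard + Cᶜ.ncard + 1 := by rw [ncard_add_ncard_compl]
    _ ≤ C.ncard + #(T.erase u₀) + 1 := by
      grw [ncard_le_ncard hbad, hab.ncard_setOf_exists_mem_le, card_image_le]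
    _ = C.ncard + #T := by rw [add_assoc, card_erase_add_one hu₀T]

end LevelFamily

theorem stmt_19_general {X : Type*} [MetricSpace X]
    (n m : ℕ) (hnm : n ≤ m)
    (U : Finset (Set X))
    (hopen : ∀ s ∈ U, IsOpen s)
    (hcover : ∀ x : X, ∃ s ∈ U, x ∈ s)
    (hord : ordCover U ≤ n + 1) :
    ∃ F : Fin (m + 1) → Finset (Set X),
      -- each family consists of pairwise disjoint closed sets
      (∀ i, ∀ s ∈ F i, IsClosed s) ∧
      (∀ i, ∀ s ∈ F i, ∀ t ∈ F i, s ≠ t → Disjoint s t) ∧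
      -- the union F = F_1 ∪ ⋯ ∪ F_{m+1} refines U
      (∀ i, ∀ s ∈ F i, ∃ u ∈ U, s ⊆ u) ∧
      -- and covers X at least m − n + 1 times
      (∀ x : X, m - n + 1 ≤ Set.ncard {i : Fin (m + 1) | ∃ s ∈ F i, x ∈ s}) := by
  obtain ⟨f, hf⟩ := PartitionOfUnity.exists_isSubordinate isClosed_univ
    (fun u : U => (u : Set X)) (fun u => hopen u u.2) fun x _ => by simpa using hcover x
  set δ : ℝ := 1 / ((m + 1) * (n + 1))
  have hδ : 0 < δ := by positivity
  have hb (i : Fin (m + 1)) : (i + 1) * δ ≤ 1 / ((n + 1 : ℕ) : ℝ) :=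
    calc (i + 1) * δ ≤ (m + 1) * δ := by gcongr; exact_mod_cast i.is_le
      _ = 1 / ((n + 1 : ℕ) : ℝ) := by push_cast; simp only [δ]; field_simp
  refine ⟨fun i => levelFamily (fun u => f u) (i * δ) ((i + 1) * δ),
    fun i s hs => isClosed_of_mem_levelFamily (fun u => (f u).continuous) hs,
    fun i s hs t ht => disjoint_of_mem_levelFamily (by gcongr; linarith) hs ht,
    fun i s hs => ?_, fun x => ?_⟩
  · obtain ⟨u, hu⟩ := exists_subset_support_of_mem_levelFamily (by positivity) hs
    exact ⟨u, u.2, hu.trans ((subset_tsupport _).trans (hf u))⟩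
  · have hT := hf.card_finsupport_le_of_ordCover_le hord x
    obtain ⟨u₀, hu₀T, hu₀⟩ := exists_one_div_le_of_sum_eq_one (f.sum_finsupport (mem_univ x)) hT
    have := nat_card_add_one_le_ncard_mem_levelFamily_add_card
      ((pairwise_disjoint_Ioo_natCast_mul δ).comp_of_injective Fin.val_injective)
      (fun i => by positivity) hb (fun u hu => by simpa [f.mem_finsupport] using hu) hu₀T hu₀
    simp only [Nat.card_eq_fintype_card, Fintype.card_fin] at this
    beta_reduce
    omega

/-- Kolmogorov–Ostrand covers: a finite open cover of order ≤ n+1 can be refined by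
m+1 families of disjoint closed sets which together cover X at least m−n+1 times. -/
theorem stmt_19 {X : Type*} [MetricSpace X] [CompactSpace X]
    (n m : ℕ) (hnm : n ≤ m)
    (U : Finset (Set X))
    (hopen : ∀ s ∈ U, IsOpen s)
    (hcover : ∀ x : X, ∃ s ∈ U, x ∈ s)
    (hord : ordCover U ≤ n + 1) :
    ∃ F : Fin (m + 1) → Finset (Set X),
      -- each family consists of pairwise disjoint closed sets
      (∀ i, ∀ s ∈ F i, IsClosed s) ∧
      (∀ i, ∀ s ∈ F i, ∀ t ∈ F i, s ≠ t → Disjoint s t) ∧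
      -- the union F = F_1 ∪ ⋯ ∪ F_{m+1} refines U
      (∀ i, ∀ s ∈ F i, ∃ u ∈ U, s ⊆ u) ∧
      -- and covers X at least m − n + 1 times
      (∀ x : X, m - n + 1 ≤ Set.ncard {i : Fin (m + 1) | ∃ s ∈ F i, x ∈ s}) :=
  stmt_19_general n m hnm U hopen hcover hord
end
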